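/- Under the assumptions of the conditional front-door formula, if additionally P(A=1|T=0,x) = 0 (one-sided non-adherence), then E[Y|do(T=0),x] = Σ_{t'∈{0,1}} E[Y|A=0,T=t',x]·P(T=t'|x). -/
import Mathlib

/-- One-sided non-adherence: under `T = 0` intake is deterministically `0`, so the
conditional front-door adjusted potential outcome under `do(T=0)` reduces to the
`A = 0` backdoor term. Binary values are indexed by `Bool` (false = 0, true = 1). -/
theorem conditional_front_door_one_sided
    (EYdoT : Bool → ℝ) (EYdoA : Bool → ℝ) (EY_AT : Bool → Bool → ℝ)
    (pT : Bool → ℝ) (pA_doT : Bool → Bool → ℝ) (pA_T : Bool → Bool → ℝ)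
    (hmed : ∀ t, EYdoT t = EYdoA false * pA_doT false t + EYdoA true * pA_doT true t)
    (hignore : ∀ a t, pA_doT a t = pA_T a t)
    (hbackdoor : ∀ a, EYdoA a = EY_AT a false * pT false + EY_AT a true * pT true)
    (hsum : ∀ t, pA_T false t + pA_T true t = 1)
    (hos : pA_T true false = 0) :
    EYdoT false = EY_AT false false * pT false + EY_AT false true * pT true := by
  have h1 := hsum false
  rw [hmed, hignore, hignore, hos, ← hbackdoor]
  have h2 : pA_T false false = 1 := by rw [hos] at h1; linarith
  rw [h2]; ring
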